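/- Let J = diag(1,-1,1), A the 3×3 tridiagonal matrix with diagonal (a,-a,a) (a real), superdiagonal (b₁,b₂), subdiagonal (c₁,c₂), and H_θ(A) = Re^J(A) cos θ + Im^J(A) sin θ. Then the vector w_θ = (b₂ - c̄₂ e^{2iθ}, 0, b̄₁ e^{2iθ} - c₁) satisfies H_θ(A) w_θ = (a cos θ) w_θ. -/

import Mathlib

/-! With `ε = exp (θ i)`, the Cartesian combination `H_θ(A)` equals `(ε⁻¹ A + ε A^#) / 2`. For the
tridiagonal `A` this is again tridiagonal, with corner diagonal entries `a cos θ`. Any `3 × 3` matrix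
`M` with `M₀₂ = M₂₀ = 0` and `M₂₂ = M₀₀` has `(M₁₂, 0, -M₁₀)` as an eigenvector for `M₀₀`, because
the middle row gives `M₁₀ M₁₂ - M₁₂ M₁₀ = 0`; and `w_θ` is `2ε` times this vector for `M = H_θ(A)`.
-/

open Matrix Complex Real

theorem Matrix.mulVec_eigenvector_fin_three {R : Type*} [CommRing R]
    (M : Matrix (Fin 3) (Fin 3) R) (h02 : M 0 2 = 0) (h20 : M 2 0 = 0) (h22 : M 2 2 = M 0 0) :
    M *ᵥ ![M 1 2, 0, -M 1 0] = M 0 0 • ![M 1 2, 0, -M 1 0] := by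
  ext i
  fin_cases i <;> simp [mulVec, dotProduct, Fin.sum_univ_three, h02, h20, h22]
  ring

theorem Complex.cos_smul_add_sin_smul {M : Type*} [AddCommGroup M] [Module ℂ M] (θ : ℝ) (X Y : M) :
    (Real.cos θ : ℂ) • ((1 / 2 : ℂ) • (X + Y)) + (Real.sin θ : ℂ) • ((1 / (2 * I)) • (X - Y)) =
      (1 / 2 : ℂ) • (exp (-(θ * I)) • X + exp (θ * I) • Y) := by
  have hI : 1 / (2 * I) = -I / 2 := by field_simp; simp
  have hexp_neg : exp (-(θ * I)) = Complex.cos θ - Complex.sin θ * I := by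
    rw [← neg_mul, exp_mul_I, Complex.cos_neg, Complex.sin_neg]; ring
  rw [hexp_neg, exp_mul_I, hI, ofReal_cos, ofReal_sin]
  module

theorem jAdjoint_tridiagonal (a : ℝ) (b₁ b₂ c₁ c₂ : ℂ) :
    !![1, 0, 0; 0, -1, 0; 0, 0, 1] * (!![(a : ℂ), b₁, 0; c₁, -(a : ℂ), b₂; 0, c₂, (a : ℂ)])ᴴ *
        !![1, 0, 0; 0, -1, 0; 0, 0, 1] =
      !![(a : ℂ), -starRingEnd ℂ c₁, 0; -starRingEnd ℂ b₁, -(a : ℂ), -starRingEnd ℂ c₂;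
        0, -starRingEnd ℂ b₂, (a : ℂ)] := by
  rw [← diagonal_vec3]
  ext i j
  fin_cases i <;> fin_cases j <;> simp [diagonal_mul, mul_diagonal, conjTranspose_apply]

theorem stmt3 (a : ℝ) (b₁ b₂ c₁ c₂ : ℂ)
    (A : Matrix (Fin 3) (Fin 3) ℂ)
    (hA : A = !![(a : ℂ), b₁, 0; c₁, -(a : ℂ), b₂; 0, c₂, (a : ℂ)])
    (J : Matrix (Fin 3) (Fin 3) ℂ)
    (hJ : J = !![1, 0, 0; 0, -1, 0; 0, 0, 1])
    (θ : ℝ)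
    (H : Matrix (Fin 3) (Fin 3) ℂ)
    (hH : H = (Real.cos θ : ℂ) • (((1:ℂ)/2) • (A + J * Aᴴ * J))
            + (Real.sin θ : ℂ) • ((1 / (2 * Complex.I)) • (A - J * Aᴴ * J)))
    (w : Fin 3 → ℂ)
    (hw : w = ![b₂ - (starRingEnd ℂ) c₂ * Complex.exp (2 * Complex.I * θ), 0,
                (starRingEnd ℂ) b₁ * Complex.exp (2 * Complex.I * θ) - c₁]) :
    H.mulVec w = ((a : ℂ) * (Real.cos θ : ℂ)) • w := by
  subst hA hJ hH hw
  rw [jAdjoint_tridiagonal, Complex.cos_smul_add_sin_smul]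
  set M := (1 / 2 : ℂ) • (exp (-(θ * I)) • !![(a : ℂ), b₁, 0; c₁, -(a : ℂ), b₂; 0, c₂, (a : ℂ)] +
    exp (θ * I) • !![(a : ℂ), -starRingEnd ℂ c₁, 0; -starRingEnd ℂ b₁, -(a : ℂ), -starRingEnd ℂ c₂;
      0, -starRingEnd ℂ b₂, (a : ℂ)]) with hM
  have hunit : exp (θ * I) * exp (-(θ * I)) = 1 := by
    rw [← Complex.exp_add, add_neg_cancel, Complex.exp_zero]
  have hsq : exp (2 * I * θ) = exp (θ * I) ^ 2 := by rw [← Complex.exp_nat_mul]; ring_nf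
  have hM00 : M 0 0 = a * Real.cos θ := by
    rw [ofReal_cos, Complex.cos, neg_mul]
    simp [hM]; ring
  have hM10 : M 1 0 = (exp (-(θ * I)) * c₁ - exp (θ * I) * starRingEnd ℂ b₁) / 2 := by
    simp [hM]; ring
  have hM12 : M 1 2 = (exp (-(θ * I)) * b₂ - exp (θ * I) * starRingEnd ℂ c₂) / 2 := by
    simp [hM]; ring
  have hw : ![b₂ - starRingEnd ℂ c₂ * exp (2 * I * θ), 0, starRingEnd ℂ b₁ * exp (2 * I * θ) - c₁]
      = (2 * exp (θ * I)) • ![M 1 2, 0, -M 1 0] := by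
    rw [hM10, hM12, smul_vec3]
    refine vec3_eq ?_ (mul_zero _).symm ?_
    · linear_combination -b₂ * hunit - starRingEnd ℂ c₂ * hsq
    · linear_combination c₁ * hunit + starRingEnd ℂ b₁ * hsq
  rw [hw, mulVec_smul, M.mulVec_eigenvector_fin_three (by simp [hM]) (by simp [hM]) (by simp [hM]),
    hM00, smul_comm]
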